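/- Every polytope that is a pyramid (the convex hull of one of its facets together with a single apex vertex outside the affine hull of that facet) is indecomposable. -/

import Mathlib

open Set Pointwise

noncomputable section PolytopeDefs

/-- A `d`-polytope: the convex hull of a finite set of points in `ℝ^d`
whose affine span is all of `ℝ^d`. -/
def IsPolytope {d : ℕ} (P : Set (Fin d → ℝ)) : Prop :=
  ∃ S : Finset (Fin d → ℝ), P = convexHull ℝ (S : Set (Fin d → ℝ)) ∧
    affineSpan ℝ (S : Set (Fin d → ℝ)) = ⊤

/-- The (exposed) faces of `P` having dimension `k`. -/
def facesDim {d : ℕ} (P : Set (Fin d → ℝ)) (k : ℕ) : Set (Set (Fin d → ℝ)) :=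
  {F | IsExposed ℝ P F ∧ F.Nonempty ∧ Module.finrank ℝ (vectorSpan ℝ F) = k}

/-- The vertices of `P`: points forming a 0-dimensional exposed face. -/
def vertexSet {d : ℕ} (P : Set (Fin d → ℝ)) : Set (Fin d → ℝ) :=
  {x | {x} ∈ facesDim P 0}

/-- The edges of `P`: the 1-dimensional exposed faces. -/
def edgeSet {d : ℕ} (P : Set (Fin d → ℝ)) : Set (Set (Fin d → ℝ)) :=
  facesDim P 1

/-- `v(P)`, the number of vertices. -/
def vCount {d : ℕ} (P : Set (Fin d → ℝ)) : ℕ := (vertexSet P).ncard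

/-- `e(P)`, the number of edges. -/
def eCount {d : ℕ} (P : Set (Fin d → ℝ)) : ℕ := (edgeSet P).ncard

/-- The degree of a vertex: the number of edges containing it. -/
def vdegree {d : ℕ} (P : Set (Fin d → ℝ)) (x : Fin d → ℝ) : ℕ :=
  {E ∈ edgeSet P | x ∈ E}.ncard

/-- Two vertices are adjacent when they are joined by an edge. -/
def Adjacent {d : ℕ} (P : Set (Fin d → ℝ)) (x y : Fin d → ℝ) : Prop :=
  x ≠ y ∧ ∃ E ∈ edgeSet P, x ∈ E ∧ y ∈ E

/-- The excess degree `ξ(P) = 2e(P) - d·v(P)`. -/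
def excess {d : ℕ} (P : Set (Fin d → ℝ)) : ℤ :=
  2 * (eCount P : ℤ) - (d : ℤ) * (vCount P : ℤ)

/-- A facet: a `(d-1)`-dimensional face. -/
def IsFacetOf {d : ℕ} (P F : Set (Fin d → ℝ)) : Prop := F ∈ facesDim P (d - 1)

/-- A ridge: a `(d-2)`-dimensional face. -/
def IsRidgeOf {d : ℕ} (P R : Set (Fin d → ℝ)) : Prop := R ∈ facesDim P (d - 2)

/-- The face lattice of `P`: all exposed faces ordered by inclusion
(this includes `∅` and `P` itself). -/
def faceLat {d : ℕ} (P : Set (Fin d → ℝ)) : Set (Set (Fin d → ℝ)) :=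
  {F | IsExposed ℝ P F}

/-- Combinatorial equivalence: the face lattices are order isomorphic. -/
def CombEquiv {d₁ d₂ : ℕ} (P : Set (Fin d₁ → ℝ)) (Q : Set (Fin d₂ → ℝ)) : Prop :=
  Nonempty (↥(faceLat P) ≃o ↥(faceLat Q))

/-- A `k`-dimensional simplex: the convex hull of `k+1` affinely independent points. -/
def IsSimplex {d : ℕ} (k : ℕ) (S : Set (Fin d → ℝ)) : Prop :=
  ∃ p : Fin (k + 1) → (Fin d → ℝ), AffineIndependent ℝ p ∧ S = convexHull ℝ (Set.range p)

/-- `Δ_{m,n}`: the Minkowski sum of an `m`-simplex and an `n`-simplex lying in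
complementary subspaces. -/
def IsDeltaMN {d : ℕ} (m n : ℕ) (Q : Set (Fin d → ℝ)) : Prop :=
  ∃ S T : Set (Fin d → ℝ), IsSimplex m S ∧ IsSimplex n T ∧
    Disjoint (vectorSpan ℝ S) (vectorSpan ℝ T) ∧ Q = S + T

/-- `P` is a pyramid with base `B`: the convex hull of `B` and an apex outside
the affine hull of `B`. -/
def IsPyramidOver {d : ℕ} (P B : Set (Fin d → ℝ)) : Prop :=
  ∃ a : Fin d → ℝ, a ∉ affineSpan ℝ B ∧ P = convexHull ℝ (insert a B)

/-- `P` is an `n`-fold pyramid over `B`. -/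
def IsMultifoldPyramidOver {d : ℕ} : ℕ → Set (Fin d → ℝ) → Set (Fin d → ℝ) → Prop
  | 0, P, B => P = B
  | n + 1, P, B => ∃ Q, IsMultifoldPyramidOver n Q B ∧ IsPyramidOver P Q

/-- The triplex `M_{k,m}`: an `m`-fold pyramid over a simplicial `k`-prism `Δ_{k-1,1}`. -/
def IsTriplex {d : ℕ} (k m : ℕ) (P : Set (Fin d → ℝ)) : Prop :=
  ∃ B, IsDeltaMN (k - 1) 1 B ∧ IsMultifoldPyramidOver m P B

/-- `Q` is obtained from `P` by truncating the vertex `u`: intersecting `P` with a closed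
halfspace whose bounding hyperplane strictly separates `u` from the other vertices. -/
def IsVertexTruncation {d : ℕ} (P : Set (Fin d → ℝ)) (u : Fin d → ℝ)
    (Q : Set (Fin d → ℝ)) : Prop :=
  ∃ (f : (Fin d → ℝ) →ₗ[ℝ] ℝ) (c : ℝ), c < f u ∧
    (∀ x ∈ vertexSet P, x ≠ u → f x < c) ∧ Q = P ∩ {x | f x ≤ c}

/-- `Q` is obtained from `P` by truncating the edge with endpoints `u₀`, `u₁`. -/
def IsEdgeTruncation {d : ℕ} (P : Set (Fin d → ℝ)) (u₀ u₁ : Fin d → ℝ)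
    (Q : Set (Fin d → ℝ)) : Prop :=
  ∃ (f : (Fin d → ℝ) →ₗ[ℝ] ℝ) (c : ℝ), c < f u₀ ∧ c < f u₁ ∧
    (∀ x ∈ vertexSet P, x ≠ u₀ → x ≠ u₁ → f x < c) ∧ Q = P ∩ {x | f x ≤ c}

/-- `A_d`: obtained by truncating the nonsimple vertex of the triplex `M_{2,d-2}`. -/
def IsA (d : ℕ) (Q : Set (Fin d → ℝ)) : Prop :=
  ∃ (P : Set (Fin d → ℝ)) (u : Fin d → ℝ), IsPolytope P ∧ IsTriplex 2 (d - 2) P ∧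
    u ∈ vertexSet P ∧ d < vdegree P u ∧ IsVertexTruncation P u Q

/-- `B_d`: obtained by truncating a simple vertex of the triplex `M_{3,d-3}`. -/
def IsB (d : ℕ) (Q : Set (Fin d → ℝ)) : Prop :=
  ∃ (P : Set (Fin d → ℝ)) (u : Fin d → ℝ), IsPolytope P ∧ IsTriplex 3 (d - 3) P ∧
    u ∈ vertexSet P ∧ vdegree P u = d ∧ IsVertexTruncation P u Q

/-- The `d`-pentasm: obtained by truncating a simple vertex of the triplex `M_{2,d-2}`. -/
def IsPentasm (d : ℕ) (Q : Set (Fin d → ℝ)) : Prop :=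
  ∃ (P : Set (Fin d → ℝ)) (u : Fin d → ℝ), IsPolytope P ∧ IsTriplex 2 (d - 2) P ∧
    u ∈ vertexSet P ∧ vdegree P u = d ∧ IsVertexTruncation P u Q

/-- `C_4`: obtained by truncating an edge of `M_{2,2}` whose endpoints are simple vertices. -/
def IsC4 (Q : Set (Fin 4 → ℝ)) : Prop :=
  ∃ (P : Set (Fin 4 → ℝ)) (u₀ u₁ : Fin 4 → ℝ), IsPolytope P ∧ IsTriplex 2 2 P ∧
    u₀ ∈ vertexSet P ∧ u₁ ∈ vertexSet P ∧ vdegree P u₀ = 4 ∧ vdegree P u₁ = 4 ∧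
    Adjacent P u₀ u₁ ∧ IsEdgeTruncation P u₀ u₁ Q

/-- The standard model of `Σ₄`: the convex hull of the ten points
`{0, e₁, e₂, e₁+e₂} ∪ {e₁+e_k, e₂+e_k, e₁+e₂+2e_k : k = 3,4}` in `ℝ⁴`. -/
def stdSigma4 : Set (Fin 4 → ℝ) :=
  convexHull ℝ
    ({![0,0,0,0], ![1,0,0,0], ![0,1,0,0], ![1,1,0,0],
      ![1,0,1,0], ![0,1,1,0], ![1,1,2,0],
      ![1,0,0,1], ![0,1,0,1], ![1,1,0,2]} : Set (Fin 4 → ℝ))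

/-- `Q` is a translate of a nonnegative scalar multiple of `P`. -/
def Homothet {d : ℕ} (P Q : Set (Fin d → ℝ)) : Prop :=
  ∃ c : ℝ, 0 ≤ c ∧ ∃ t : Fin d → ℝ, Q = (fun x => t + c • x) '' P

/-- `P` is (Minkowski) decomposable: `P = Q + R` for polytopes `Q`, `R` neither of which
is homothetic to `P`. -/
def Decomposable {d : ℕ} (P : Set (Fin d → ℝ)) : Prop :=
  ∃ Q R : Set (Fin d → ℝ),
    (∃ A : Finset (Fin d → ℝ), Q = convexHull ℝ (A : Set (Fin d → ℝ))) ∧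
    (∃ B : Finset (Fin d → ℝ), R = convexHull ℝ (B : Set (Fin d → ℝ))) ∧
    P = Q + R ∧ ¬ Homothet P Q ∧ ¬ Homothet P R

/-- Shephard's property for a facet `F` of `P`: every vertex of `F` lies on exactly one
edge of `P` not contained in `F`. -/
def Shephard {d : ℕ} (P F : Set (Fin d → ℝ)) : Prop :=
  ∀ u ∈ vertexSet F, {E ∈ edgeSet P | u ∈ E ∧ ¬ E ⊆ F}.ncard = 1

end PolytopeDefs

/-!
Write the pyramid as `P = conv({a} ∪ F)` with `F` on the hyperplane `l = c` and `l a < c`, and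
let `P = Q + R`, `a = q₀ + r₀`. The points of `P` with `l ≤ l a + γ (c - l a)` lie in the
homothet `a + γ (P - a)`. Bounding `l` on `Q + r₀` and on `q₀ + R` therefore gives
`Q ⊆ q₀ + α (P - a)` and `R ⊆ r₀ + β (P - a)` with `α + β = 1`. These two homothets sum into
`P = Q + R`, so cancelling the compact summand `R` forces `Q = q₀ + α (P - a)`.
-/

section Pyramid

variable {E : Type*} [AddCommGroup E] [Module ℝ E]

theorem Convex.image_homothety_add_image_homothety_subset {P : Set E} (hP : Convex ℝ P)
    {α β : ℝ} (hα : 0 ≤ α) (hβ : 0 ≤ β) (hαβ : α + β = 1) {s t : E} (hst : s + t = 0) :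
    (fun p => s + α • p) '' P + (fun p => t + β • p) '' P ⊆ P := by
  rintro _ ⟨_, ⟨p, hp, rfl⟩, _, ⟨p', hp', rfl⟩, rfl⟩
  convert hP hp hp' hα hβ hαβ using 1
  change s + α • p + (t + β • p') = α • p + β • p'
  rw [add_add_add_comm, hst, zero_add]

variable {a : E} {F : Set E} {l : E →ₗ[ℝ] ℝ} {c : ℝ}

theorem exists_mem_convexJoin_eq_add_smul_sub (hF : ∀ z ∈ F, l z = c) (ha : l a < c)
    {γ : ℝ} {x : E} (hx : x ∈ convexJoin ℝ {a} F) (hlx : l x ≤ l a + γ * (c - l a)) :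
    ∃ p ∈ convexJoin ℝ {a} F, x = a + γ • (p - a) := by
  simp only [convexJoin_singleton_left, mem_iUnion, segment_eq_image'] at hx
  obtain ⟨z, hz, t, ⟨ht₀, ht₁⟩, rfl⟩ := hx
  have htγ : t ≤ γ := by
    simp only [map_add, map_smul, map_sub, smul_eq_mul, hF z hz] at hlx
    nlinarith
  rcases ht₀.eq_or_lt with rfl | ht
  · exact ⟨a, subset_convexJoin_left ⟨z, hz⟩ rfl, by simp⟩
  have hγ : 0 < γ := ht.trans_le htγ
  refine ⟨a + (t / γ) • (z - a), ?_, ?_⟩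
  · simp only [convexJoin_singleton_left, mem_iUnion, segment_eq_image']
    exact ⟨z, hz, t / γ, ⟨by positivity, (div_le_one hγ).2 htγ⟩, rfl⟩
  · rw [add_sub_cancel_left, smul_smul, mul_div_cancel₀ _ hγ.ne']

theorem subset_image_homothety_of_add_mem_convexJoin (hF : ∀ z ∈ F, l z = c) (ha : l a < c)
    {γ : ℝ} {Q : Set E} {q₀ w : E} (hw : q₀ + w = a)
    (hQ : ∀ q ∈ Q, q + w ∈ convexJoin ℝ {a} F) (hQl : ∀ q ∈ Q, l q ≤ l q₀ + γ * (c - l a)) :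
    Q ⊆ (fun p => (q₀ - γ • a) + γ • p) '' convexJoin ℝ {a} F := by
  intro q hq
  have hl : l (q + w) ≤ l a + γ * (c - l a) := by
    have hla : l q₀ + l w = l a := by rw [← map_add, hw]
    rw [map_add]
    linarith [hQl q hq]
  obtain ⟨p, hp, hqp⟩ := exists_mem_convexJoin_eq_add_smul_sub hF ha (hQ q hq) hl
  refine ⟨p, hp, ?_⟩
  change q₀ - γ • a + γ • p = q
  rw [eq_sub_of_add_eq hqp, eq_sub_of_add_eq hw, smul_sub]
  abel

end Pyramid

section Cancellation

variable {E : Type*} [AddCommGroup E] [Module ℝ E] [TopologicalSpace E] [IsTopologicalAddGroup E]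
  [ContinuousSMul ℝ E] [LocallyConvexSpace ℝ E]

theorem subset_of_add_subset_add {A B C : Set E} (hB : Convex ℝ B) (hBc : IsClosed B)
    (hC : IsCompact C) (hCne : C.Nonempty) (h : A + C ⊆ B + C) : A ⊆ B := by
  intro x hx
  by_contra hxB
  obtain ⟨f, u, hfB, hfx⟩ := geometric_hahn_banach_closed_point hB hBc hxB
  obtain ⟨y, hy, hymax⟩ := hC.exists_isMaxOn hCne f.continuous.continuousOn
  obtain ⟨b, hb, y', hy', hsum⟩ := h (add_mem_add hx hy)
  have hf : f b + f y' = f x + f y := by rw [← map_add, ← map_add]; exact congrArg f hsum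
  linarith [hfB b hb, show f y' ≤ f y from hymax hy']

theorem Convex.eq_image_homothety_of_add_eq {P Q R : Set E} (hP : Convex ℝ P)
    (hPQR : P = Q + R) (hQ : IsClosed Q) (hQc : Convex ℝ Q) (hR : IsCompact R)
    (hRne : R.Nonempty) {α β : ℝ} (hα : 0 ≤ α) (hβ : 0 ≤ β) (hαβ : α + β = 1) {s t : E}
    (hst : s + t = 0) (hQP : Q ⊆ (fun p => s + α • p) '' P)
    (hRP : R ⊆ (fun p => t + β • p) '' P) :
    Q = (fun p => s + α • p) '' P := by
  refine hQP.antisymm (subset_of_add_subset_add hQc hQ hR hRne ?_)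
  calc (fun p => s + α • p) '' P + R
      ⊆ (fun p => s + α • p) '' P + (fun p => t + β • p) '' P := add_subset_add_left hRP
    _ ⊆ P := hP.image_homothety_add_image_homothety_subset hα hβ hαβ hst
    _ = Q + R := hPQR

end Cancellation

section Decomposition

variable {E : Type*} [AddCommGroup E] [Module ℝ E] [TopologicalSpace E] {a : E}
  {F Q R : Set E} {l : StrongDual ℝ E} {c : ℝ}

theorem exists_subset_image_homothety_of_convexJoin_eq_add (hF : ∀ z ∈ F, l z = c)
    (hFne : F.Nonempty) (ha : l a < c) (hQ : IsCompact Q) (hR : IsCompact R)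
    (hPQR : convexJoin ℝ {a} F = Q + R) :
    ∃ α β : ℝ, 0 ≤ α ∧ 0 ≤ β ∧ α + β = 1 ∧ ∃ s t : E, s + t = 0 ∧
      Q ⊆ (fun p => s + α • p) '' convexJoin ℝ {a} F ∧
      R ⊆ (fun p => t + β • p) '' convexJoin ℝ {a} F := by
  have hPc : ∀ x ∈ convexJoin ℝ {a} F, l x ≤ c := fun x hx =>
    convexHull_min (by rintro y (rfl | hy); exacts [ha.le, (hF y hy).le])
      (convex_halfSpace_le l.isLinear c) (convexJoin_subset_convexHull _ _ hx)
  obtain ⟨q₀, hq₀, r₀, hr₀, hqr⟩ :=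
    mem_add.1 (hPQR ▸ subset_convexJoin_left hFne (mem_singleton a))
  obtain ⟨q₁, hq₁, hq₁max⟩ := hQ.exists_isMaxOn ⟨q₀, hq₀⟩ l.continuous.continuousOn
  obtain ⟨r₁, hr₁, hr₁max⟩ := hR.exists_isMaxOn ⟨r₀, hr₀⟩ l.continuous.continuousOn
  have hmax : l q₁ + l r₁ = c := by
    refine le_antisymm (map_add l q₁ r₁ ▸ hPc _ (hPQR ▸ add_mem_add hq₁ hr₁)) ?_
    obtain ⟨z, hz⟩ := hFne
    obtain ⟨q, hq, r, hr, rfl⟩ :=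
      mem_add.1 (hPQR ▸ subset_convexJoin_right (singleton_nonempty a) hz)
    rw [← hF _ hz, map_add]
    exact add_le_add (hq₁max hq) (hr₁max hr)
  have hla : l q₀ + l r₀ = l a := by rw [← map_add, hqr]
  have hca : 0 < c - l a := sub_pos.2 ha
  set α := (l q₁ - l q₀) / (c - l a)
  set β := (l r₁ - l r₀) / (c - l a)
  have hαc : α * (c - l a) = l q₁ - l q₀ := div_mul_cancel₀ _ hca.ne'
  have hβc : β * (c - l a) = l r₁ - l r₀ := div_mul_cancel₀ _ hca.ne'
  have hαβ : α + β = 1 := by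
    rw [← add_div, div_eq_one_iff_eq hca.ne']
    linarith
  refine ⟨α, β, div_nonneg (sub_nonneg.2 (hq₁max hq₀)) hca.le,
    div_nonneg (sub_nonneg.2 (hr₁max hr₀)) hca.le, hαβ, q₀ - α • a, r₀ - β • a, ?_, ?_, ?_⟩
  · rw [sub_add_sub_comm, ← add_smul, hαβ, one_smul, hqr, sub_self]
  · refine subset_image_homothety_of_add_mem_convexJoin hF ha hqr
      (fun q hq => hPQR ▸ add_mem_add hq hr₀) fun q hq => ?_
    simp only [ContinuousLinearMap.coe_coe]
    linarith [show l q ≤ l q₁ from hq₁max hq]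
  · refine subset_image_homothety_of_add_mem_convexJoin hF ha (by rw [add_comm, hqr])
      (fun r hr => hPQR ▸ add_comm q₀ r ▸ add_mem_add hq₀ hr) fun r hr => ?_
    simp only [ContinuousLinearMap.coe_coe]
    linarith [show l r ≤ l r₁ from hr₁max hr]

theorem exists_homothety_eq_of_convexJoin_eq_add [IsTopologicalAddGroup E] [ContinuousSMul ℝ E]
    [LocallyConvexSpace ℝ E] [T2Space E] (hF : ∀ z ∈ F, l z = c) (hFne : F.Nonempty)
    (hFc : Convex ℝ F) (ha : l a < c) (hQ : IsCompact Q) (hQc : Convex ℝ Q) (hR : IsCompact R)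
    (hPQR : convexJoin ℝ {a} F = Q + R) :
    ∃ α : ℝ, 0 ≤ α ∧ ∃ t : E, Q = (fun p => t + α • p) '' convexJoin ℝ {a} F := by
  obtain ⟨α, β, hα, hβ, hαβ, s, t, hst, hQP, hRP⟩ :=
    exists_subset_image_homothety_of_convexJoin_eq_add hF hFne ha hQ hR hPQR
  have hQR : (Q + R).Nonempty := hPQR ▸ ⟨a, subset_convexJoin_left hFne (mem_singleton a)⟩
  exact ⟨α, hα, s, ((convex_singleton a).convexJoin hFc).eq_image_homothety_of_add_eq hPQR
    hQ.isClosed hQc hR hQR.of_add_right hα hβ hαβ hst hQP hRP⟩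

end Decomposition

theorem IsExposed.exists_forall_eq_and_lt {E : Type*} [AddCommGroup E] [Module ℝ E]
    [TopologicalSpace E] {P F : Set E} (hPF : IsExposed ℝ P F) (hFne : F.Nonempty) {a : E}
    (haP : a ∈ P) (haF : a ∉ F) :
    ∃ (l : StrongDual ℝ E) (c : ℝ), (∀ z ∈ F, l z = c) ∧ l a < c := by
  obtain ⟨l, rfl⟩ := hPF hFne
  obtain ⟨z₀, hz₀P, hz₀max⟩ := hFne
  refine ⟨l, l z₀, fun z hz => le_antisymm (hz₀max z hz.1) (hz.2 z₀ hz₀P), ?_⟩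
  exact (hz₀max a haP).lt_of_ne fun h => haF ⟨haP, fun y hy => h ▸ hz₀max y hy⟩

theorem stmt11_general (d : ℕ) (P : Set (Fin d → ℝ))
    (F : Set (Fin d → ℝ)) (hF : IsFacetOf P F) (hpyr : IsPyramidOver P F) :
    ¬ Decomposable P := by
  rintro ⟨Q, R, ⟨A, rfl⟩, ⟨B, rfl⟩, hPQR, hQ, -⟩
  obtain ⟨hFexp, hFne, -⟩ := hF
  obtain ⟨a, haF, rfl⟩ := hpyr
  have hFc : Convex ℝ F := hFexp.convex (convex_convexHull ℝ _)
  obtain ⟨l, c, hFl, hla⟩ := hFexp.exists_forall_eq_and_lt hFne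
    (subset_convexHull ℝ _ (mem_insert a F)) fun h => haF (subset_affineSpan ℝ F h)
  rw [convexHull_insert hFne, hFc.convexHull_eq] at hPQR hQ
  obtain ⟨α, hα, t, hQP⟩ := exists_homothety_eq_of_convexJoin_eq_add hFl hFne hFc hla
    (A.finite_toSet.isCompact_convexHull (𝕜 := ℝ)) (convex_convexHull ℝ _)
    (B.finite_toSet.isCompact_convexHull (𝕜 := ℝ)) hPQR
  exact hQ ⟨α, hα, t, hQP⟩

theorem stmt11 (d : ℕ) (P : Set (Fin d → ℝ)) (hP : IsPolytope P)
    (F : Set (Fin d → ℝ)) (hF : IsFacetOf P F) (hpyr : IsPyramidOver P F) :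
    ¬ Decomposable P :=
  stmt11_general d P F hF hpyr
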